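/- If Γ is a left σ-covariant first-order calculus, then the kernel of the flip-over operator ℓσ : Γ⊗A → A⊗Γ is an A-subbimodule of Γ⊗A, where A acts on Γ⊗A on the left by a·(ϑ⊗b) via the left module structure on the Γ factor, and on the right by (ϑ⊗b)·c = ϑ⊗bc. -/
import Mathlib


open TensorProduct

noncomputable section

variable {A : Type} {Γ : Type} [Ring A] [Algebra ℂ A] [AddCommGroup Γ] [Module ℂ Γ]

/-- A first-order differential calculus over the unital ℂ-algebra `A`:
a unital `A`-bimodule `Γ` with a differential `d` satisfying the Leibniz rule,
such that `ι^l(a ⊗ b) = a · d b` is surjective. -/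
structure FODC (A Γ : Type) [Ring A] [Algebra ℂ A] [AddCommGroup Γ] [Module ℂ Γ] where
  ml : A ⊗[ℂ] Γ →ₗ[ℂ] Γ
  mr : Γ ⊗[ℂ] A →ₗ[ℂ] Γ
  d : A →ₗ[ℂ] Γ
  ml_assoc : ∀ (a b : A) (x : Γ), ml (a ⊗ₜ ml (b ⊗ₜ x)) = ml ((a * b) ⊗ₜ x)
  mr_assoc : ∀ (x : Γ) (a b : A), mr (mr (x ⊗ₜ a) ⊗ₜ b) = mr (x ⊗ₜ (a * b))
  mid_assoc : ∀ (a : A) (x : Γ) (b : A), ml (a ⊗ₜ mr (x ⊗ₜ b)) = mr (ml (a ⊗ₜ x) ⊗ₜ b)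
  one_ml : ∀ x : Γ, ml ((1 : A) ⊗ₜ x) = x
  mr_one : ∀ x : Γ, mr (x ⊗ₜ (1 : A)) = x
  leibniz : ∀ a b : A, d (a * b) = ml (a ⊗ₜ d b) + mr (d a ⊗ₜ b)
  surj : Function.Surjective (ml ∘ₗ LinearMap.lTensor A d)

/-- `ι^l = m^l ∘ (id ⊗ d)`. -/
def FODC.iotaL (C : FODC A Γ) : A ⊗[ℂ] A →ₗ[ℂ] Γ := C.ml ∘ₗ LinearMap.lTensor A C.d

/-- `ι^r = m^r ∘ (d ⊗ id)`. -/
def FODC.iotaR (C : FODC A Γ) : A ⊗[ℂ] A →ₗ[ℂ] Γ := C.mr ∘ₗ LinearMap.rTensor A C.d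

/-- `σ` is a braid operator compatible with the multiplication:
`σ(m⊗id) = (id⊗m)(σ⊗id)(id⊗σ)` and `σ(id⊗m) = (m⊗id)(id⊗σ)(σ⊗id)`. -/
def IsBraid (σ : A ⊗[ℂ] A →ₗ[ℂ] A ⊗[ℂ] A) : Prop :=
  (∀ a b c : A, σ ((a * b) ⊗ₜ c) =
      (LinearMap.lTensor A (LinearMap.mul' ℂ A))
        ((TensorProduct.assoc ℂ A A A)
          ((LinearMap.rTensor A σ)
            ((TensorProduct.assoc ℂ A A A).symm (a ⊗ₜ σ (b ⊗ₜ c)))))) ∧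
  (∀ a b c : A, σ (a ⊗ₜ (b * c)) =
      (LinearMap.rTensor A (LinearMap.mul' ℂ A))
        ((TensorProduct.assoc ℂ A A A).symm
          ((LinearMap.lTensor A σ)
            ((TensorProduct.assoc ℂ A A A)
              ((LinearMap.rTensor A σ) ((a ⊗ₜ b) ⊗ₜ c))))))

/-- `ℓσ` is a left flip-over operator for `σ`: `ℓσ(ι^l⊗id) = (id⊗ι^l)(σ⊗id)(id⊗σ)`. -/
def IsLeftFlip (C : FODC A Γ) (σ : A ⊗[ℂ] A →ₗ[ℂ] A ⊗[ℂ] A)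
    (lσ : Γ ⊗[ℂ] A →ₗ[ℂ] A ⊗[ℂ] Γ) : Prop :=
  lσ ∘ₗ LinearMap.rTensor A C.iotaL =
    LinearMap.lTensor A C.iotaL ∘ₗ (TensorProduct.assoc ℂ A A A).toLinearMap ∘ₗ
      LinearMap.rTensor A σ ∘ₗ (TensorProduct.assoc ℂ A A A).symm.toLinearMap ∘ₗ
      LinearMap.lTensor A σ ∘ₗ (TensorProduct.assoc ℂ A A A).toLinearMap

/-- `rσ` is a right flip-over operator for `σ`: `rσ(id⊗ι^r) = (ι^r⊗id)(id⊗σ)(σ⊗id)`. -/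
def IsRightFlip (C : FODC A Γ) (σ : A ⊗[ℂ] A →ₗ[ℂ] A ⊗[ℂ] A)
    (rσ : A ⊗[ℂ] Γ →ₗ[ℂ] Γ ⊗[ℂ] A) : Prop :=
  rσ ∘ₗ LinearMap.lTensor A C.iotaR =
    LinearMap.rTensor A C.iotaR ∘ₗ (TensorProduct.assoc ℂ A A A).symm.toLinearMap ∘ₗ
      LinearMap.lTensor A σ ∘ₗ (TensorProduct.assoc ℂ A A A).toLinearMap ∘ₗ
      LinearMap.rTensor A σ ∘ₗ (TensorProduct.assoc ℂ A A A).symm.toLinearMap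

set_option synthInstance.maxHeartbeats 1000000
set_option maxHeartbeats 1000000

section Aux

variable (C : FODC A Γ) (σ : A ⊗[ℂ] A ≃ₗ[ℂ] A ⊗[ℂ] A)
  (lσ : Γ ⊗[ℂ] A →ₗ[ℂ] A ⊗[ℂ] Γ)

lemma iotaL_tmul (x y : A) : C.iotaL (x ⊗ₜ y) = C.ml (x ⊗ₜ C.d y) := by
  simp [FODC.iotaL]

lemma ml_iota (g v q : A) :
    C.ml (g ⊗ₜ C.iotaL (v ⊗ₜ q)) = C.iotaL ((g * v) ⊗ₜ q) := by
  simp [iotaL_tmul, C.ml_assoc]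

/-- `K = assoc ∘ (σ⊗id) ∘ assoc⁻¹ : A⊗(A⊗A) → A⊗(A⊗A)`. -/
def Kmap : A ⊗[ℂ] (A ⊗[ℂ] A) →ₗ[ℂ] A ⊗[ℂ] (A ⊗[ℂ] A) :=
  (TensorProduct.assoc ℂ A A A).toLinearMap ∘ₗ LinearMap.rTensor A σ.toLinearMap ∘ₗ
    (TensorProduct.assoc ℂ A A A).symm.toLinearMap

lemma Kmap_tmul (x y z : A) :
    Kmap σ (x ⊗ₜ (y ⊗ₜ z)) = (TensorProduct.assoc ℂ A A A) (σ (x ⊗ₜ y) ⊗ₜ z) := by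
  simp [Kmap]

/-- `P = (m⊗id) ∘ assoc⁻¹ ∘ (id⊗σ) ∘ assoc : (A⊗A)⊗A → A⊗A`. -/
def Pmap : (A ⊗[ℂ] A) ⊗[ℂ] A →ₗ[ℂ] A ⊗[ℂ] A :=
  LinearMap.rTensor A (LinearMap.mul' ℂ A) ∘ₗ (TensorProduct.assoc ℂ A A A).symm.toLinearMap ∘ₗ
    LinearMap.lTensor A σ.toLinearMap ∘ₗ (TensorProduct.assoc ℂ A A A).toLinearMap

/-- `M : A⊗(A⊗Γ) → A⊗Γ`, `a⊗ξ ↦ (id⊗m^l)(assoc((σ⊗id)(assoc⁻¹(a⊗ξ))))`. -/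
def Mmap : A ⊗[ℂ] (A ⊗[ℂ] Γ) →ₗ[ℂ] A ⊗[ℂ] Γ :=
  LinearMap.lTensor A C.ml ∘ₗ (TensorProduct.assoc ℂ A A Γ).toLinearMap ∘ₗ
    LinearMap.rTensor Γ σ.toLinearMap ∘ₗ (TensorProduct.assoc ℂ A A Γ).symm.toLinearMap

/-- `N : (A⊗Γ)⊗A → A⊗Γ`, `(ξ⊗a) ↦ (m⊗id)(assoc⁻¹((id⊗ℓσ)(assoc(ξ⊗a))))`. -/
def Nmap : (A ⊗[ℂ] Γ) ⊗[ℂ] A →ₗ[ℂ] A ⊗[ℂ] Γ :=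
  LinearMap.rTensor Γ (LinearMap.mul' ℂ A) ∘ₗ (TensorProduct.assoc ℂ A A Γ).symm.toLinearMap ∘ₗ
    LinearMap.lTensor A lσ ∘ₗ (TensorProduct.assoc ℂ A Γ A).toLinearMap

def Dmap : (A ⊗[ℂ] A) ⊗[ℂ] (A ⊗[ℂ] A) →ₗ[ℂ] A ⊗[ℂ] Γ :=
  LinearMap.rTensor Γ (LinearMap.mul' ℂ A) ∘ₗ (TensorProduct.assoc ℂ A A Γ).symm.toLinearMap ∘ₗ
    LinearMap.lTensor A (LinearMap.lTensor A C.iotaL ∘ₗ Kmap σ) ∘ₗ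
    (TensorProduct.assoc ℂ A A (A ⊗[ℂ] A)).toLinearMap

lemma flip_apply' (hflip : IsLeftFlip C σ.toLinearMap lσ) (x y z : A) :
    lσ (C.iotaL (x ⊗ₜ y) ⊗ₜ z) =
      LinearMap.lTensor A C.iotaL (Kmap σ (x ⊗ₜ σ (y ⊗ₜ z))) := by
  have h := LinearMap.congr_fun hflip ((x ⊗ₜ y) ⊗ₜ z)
  simpa [Kmap] using h

lemma braid2' (hσ : IsBraid σ.toLinearMap) (x y z : A) :
    σ (x ⊗ₜ (y * z)) = Pmap σ (σ (x ⊗ₜ y) ⊗ₜ z) := by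
  have h := hσ.2 x y z
  simpa [Pmap] using h

lemma braid1' (hσ : IsBraid σ.toLinearMap) (x y z : A) :
    σ ((x * y) ⊗ₜ z) =
      LinearMap.lTensor A (LinearMap.mul' ℂ A) (Kmap σ (x ⊗ₜ σ (y ⊗ₜ z))) := by
  have h := hσ.1 x y z
  simpa [Kmap] using h

/-! ### Left action -/

lemma lemA1 (v q : A) (s : A ⊗[ℂ] A) :
    LinearMap.lTensor A C.iotaL
      ((TensorProduct.assoc ℂ A A A)
        ((LinearMap.lTensor A (LinearMap.mul' ℂ A) ((TensorProduct.assoc ℂ A A A) (s ⊗ₜ v))) ⊗ₜ q)) =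
    LinearMap.lTensor A C.ml ((TensorProduct.assoc ℂ A A Γ) (s ⊗ₜ C.iotaL (v ⊗ₜ q))) := by
  induction s using TensorProduct.induction_on with
  | zero => simp
  | tmul f g => simp [ml_iota]
  | add x y hx hy => simp only [add_tmul, map_add, hx, hy]

lemma lemA2 (a q : A) (w : A ⊗[ℂ] A) :
    LinearMap.lTensor A C.iotaL
      ((TensorProduct.assoc ℂ A A A)
        ((LinearMap.lTensor A (LinearMap.mul' ℂ A) (Kmap σ (a ⊗ₜ w))) ⊗ₜ q)) =
    Mmap C σ (a ⊗ₜ LinearMap.lTensor A C.iotaL ((TensorProduct.assoc ℂ A A A) (w ⊗ₜ q))) := by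
  induction w using TensorProduct.induction_on with
  | zero => simp [Mmap]
  | tmul u v =>
      rw [Kmap_tmul, lemA1]
      simp [Mmap]
  | add x y hx hy =>
      simp only [tmul_add, add_tmul, map_add, hx, hy]

lemma claim1 (hflip : IsLeftFlip C σ.toLinearMap lσ) (hσ : IsBraid σ.toLinearMap)
    (a b c e : A) :
    lσ (C.iotaL ((a * b) ⊗ₜ c) ⊗ₜ e) = Mmap C σ (a ⊗ₜ lσ (C.iotaL (b ⊗ₜ c) ⊗ₜ e)) := by
  rw [flip_apply' C σ lσ hflip, flip_apply' C σ lσ hflip]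
  generalize σ (c ⊗ₜ e) = z
  induction z using TensorProduct.induction_on with
  | zero => simp [Mmap]
  | tmul p q =>
      rw [Kmap_tmul, Kmap_tmul, braid1' σ hσ]
      exact lemA2 C σ a q (σ (b ⊗ₜ p))
  | add x y hx hy => simp only [tmul_add, map_add, hx, hy]

lemma main1 (hflip : IsLeftFlip C σ.toLinearMap lσ) (hσ : IsBraid σ.toLinearMap)
    (a : A) (ω : Γ ⊗[ℂ] A) :
    lσ (LinearMap.rTensor A C.ml ((TensorProduct.assoc ℂ A Γ A).symm (a ⊗ₜ ω))) =
      Mmap C σ (a ⊗ₜ lσ ω) := by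
  induction ω using TensorProduct.induction_on with
  | zero => simp [Mmap]
  | tmul γ e =>
      obtain ⟨z, hz⟩ := C.surj γ
      rw [show (C.ml ∘ₗ LinearMap.lTensor A C.d) z = C.iotaL z from rfl] at hz
      subst hz
      induction z using TensorProduct.induction_on with
      | zero => simp [Mmap]
      | tmul b c =>
          rw [show (TensorProduct.assoc ℂ A Γ A).symm (a ⊗ₜ (C.iotaL (b ⊗ₜ c) ⊗ₜ e))
              = (a ⊗ₜ C.iotaL (b ⊗ₜ c)) ⊗ₜ e from by simp]
          rw [LinearMap.rTensor_tmul, ml_iota]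
          exact claim1 C σ lσ hflip hσ a b c e
      | add x y hx hy =>
          simp only [map_add, add_tmul, tmul_add] at hx hy ⊢
          rw [hx, hy]
  | add x y hx hy =>
      simp only [map_add, tmul_add, hx, hy]

end Aux
section Aux2

variable (C : FODC A Γ) (σ : A ⊗[ℂ] A ≃ₗ[ℂ] A ⊗[ℂ] A)
  (lσ : Γ ⊗[ℂ] A →ₗ[ℂ] A ⊗[ℂ] Γ)

lemma lemB1 (f e : A) (t : A ⊗[ℂ] A) :
    LinearMap.lTensor A C.iotaL
      ((TensorProduct.assoc ℂ A A A)
        ((LinearMap.rTensor A (LinearMap.mul' ℂ A)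
            ((TensorProduct.assoc ℂ A A A).symm (f ⊗ₜ t))) ⊗ₜ e)) =
    LinearMap.rTensor Γ (LinearMap.mul' ℂ A)
      ((TensorProduct.assoc ℂ A A Γ).symm
        (f ⊗ₜ LinearMap.lTensor A C.iotaL ((TensorProduct.assoc ℂ A A A) (t ⊗ₜ e)))) := by
  induction t using TensorProduct.induction_on with
  | zero => simp
  | tmul h k => simp
  | add x y hx hy => simp only [tmul_add, add_tmul, map_add, hx, hy]

lemma lemC' (c e : A) (s : A ⊗[ℂ] A) :
    LinearMap.lTensor A C.iotaL
      ((TensorProduct.assoc ℂ A A A) ((Pmap σ (s ⊗ₜ c)) ⊗ₜ e)) =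
    Dmap C σ (s ⊗ₜ (c ⊗ₜ e)) := by
  induction s using TensorProduct.induction_on with
  | zero => simp [Pmap, Dmap]
  | tmul f g =>
      have h := lemB1 C f e (σ (g ⊗ₜ c))
      simp only [Pmap, Dmap, Kmap, LinearMap.coe_comp, Function.comp_apply,
        LinearEquiv.coe_coe, TensorProduct.assoc_tmul, TensorProduct.assoc_symm_tmul,
        LinearMap.lTensor_tmul] at h ⊢
      exact h
  | add x y hx hy => simp only [add_tmul, map_add, hx, hy]

lemma lemC (hσ : IsBraid σ.toLinearMap) (x p : A) (u : A ⊗[ℂ] A) :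
    LinearMap.lTensor A C.iotaL
      (Kmap σ (x ⊗ₜ LinearMap.rTensor A (LinearMap.mul' ℂ A)
        ((TensorProduct.assoc ℂ A A A).symm (p ⊗ₜ u)))) =
    Dmap C σ (σ (x ⊗ₜ p) ⊗ₜ u) := by
  induction u using TensorProduct.induction_on with
  | zero => simp [Kmap, Dmap]
  | tmul c e =>
      rw [show (TensorProduct.assoc ℂ A A A).symm (p ⊗ₜ (c ⊗ₜ e)) = (p ⊗ₜ c) ⊗ₜ e from by simp,
        LinearMap.rTensor_tmul, LinearMap.mul'_apply, Kmap_tmul, braid2' σ hσ]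
      exact lemC' C σ c e (σ (x ⊗ₜ p))
  | add a b ha hb => simp only [tmul_add, map_add, ha, hb]

lemma lemB (hflip : IsLeftFlip C σ.toLinearMap lσ) (q a : A) (s : A ⊗[ℂ] A) :
    Nmap lσ ((LinearMap.lTensor A C.iotaL ((TensorProduct.assoc ℂ A A A) (s ⊗ₜ q))) ⊗ₜ a) =
    Dmap C σ (s ⊗ₜ σ (q ⊗ₜ a)) := by
  induction s using TensorProduct.induction_on with
  | zero => simp [Nmap, Dmap]
  | tmul f g =>
      simp only [Nmap, Dmap, LinearMap.coe_comp, Function.comp_apply, LinearEquiv.coe_coe,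
        TensorProduct.assoc_tmul, LinearMap.lTensor_tmul, TensorProduct.assoc_symm_tmul]
      rw [flip_apply' C σ lσ hflip]
  | add x y hx hy => simp only [add_tmul, map_add, hx, hy]

lemma claim2 (hflip : IsLeftFlip C σ.toLinearMap lσ) (hσ : IsBraid σ.toLinearMap)
    (x y b a : A) :
    lσ (C.iotaL (x ⊗ₜ y) ⊗ₜ (b * a)) = Nmap lσ (lσ (C.iotaL (x ⊗ₜ y) ⊗ₜ b) ⊗ₜ a) := by
  rw [flip_apply' C σ lσ hflip, flip_apply' C σ lσ hflip, braid2' σ hσ]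
  generalize σ (y ⊗ₜ b) = w
  induction w using TensorProduct.induction_on with
  | zero => simp [Pmap, Kmap, Nmap]
  | tmul p q =>
      rw [show Pmap σ ((p ⊗ₜ q) ⊗ₜ a)
          = LinearMap.rTensor A (LinearMap.mul' ℂ A)
              ((TensorProduct.assoc ℂ A A A).symm (p ⊗ₜ σ (q ⊗ₜ a))) from by simp [Pmap],
        lemC C σ hσ x p (σ (q ⊗ₜ a)), Kmap_tmul]
      exact (lemB C σ lσ hflip q a (σ (x ⊗ₜ p))).symm
  | add s t hs ht => simp only [add_tmul, tmul_add, map_add, hs, ht]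

lemma main2 (hflip : IsLeftFlip C σ.toLinearMap lσ) (hσ : IsBraid σ.toLinearMap)
    (a : A) (ω : Γ ⊗[ℂ] A) :
    lσ (LinearMap.lTensor Γ (LinearMap.mulRight ℂ a) ω) = Nmap lσ (lσ ω ⊗ₜ a) := by
  induction ω using TensorProduct.induction_on with
  | zero => simp [Nmap]
  | tmul γ b =>
      obtain ⟨z, hz⟩ := C.surj γ
      rw [show (C.ml ∘ₗ LinearMap.lTensor A C.d) z = C.iotaL z from rfl] at hz
      subst hz
      induction z using TensorProduct.induction_on with
      | zero => simp [Nmap]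
      | tmul x y =>
          rw [LinearMap.lTensor_tmul, LinearMap.mulRight_apply]
          exact claim2 C σ lσ hflip hσ x y b a
      | add s t hs ht =>
          simp only [map_add, add_tmul] at hs ht ⊢
          rw [hs, ht]
  | add s t hs ht => simp only [map_add, add_tmul, hs, ht]

end Aux2

/-- The kernel of the left flip-over operator `ℓσ : Γ⊗A → A⊗Γ` is an
`A`-subbimodule of `Γ⊗A` (left action through the `Γ` factor, right action on
the `A` factor). -/
theorem stmt_6 (C : FODC A Γ) (σ : A ⊗[ℂ] A ≃ₗ[ℂ] A ⊗[ℂ] A)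
    (hσ : IsBraid σ.toLinearMap)
    (lσ : Γ ⊗[ℂ] A →ₗ[ℂ] A ⊗[ℂ] Γ) (hflip : IsLeftFlip C σ.toLinearMap lσ) :
    ∀ ω ∈ LinearMap.ker lσ, ∀ a : A,
      (LinearMap.rTensor A C.ml) ((TensorProduct.assoc ℂ A Γ A).symm (a ⊗ₜ ω)) ∈
          LinearMap.ker lσ ∧
        (LinearMap.lTensor Γ (LinearMap.mulRight ℂ a)) ω ∈ LinearMap.ker lσ := by
  intro ω hω a
  rw [LinearMap.mem_ker] at hω
  constructor
  · rw [LinearMap.mem_ker, main1 C σ lσ hflip hσ a ω, hω]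
    simp [Mmap]
  · rw [LinearMap.mem_ker, main2 C σ lσ hflip hσ a ω, hω]
    simp [Nmap]
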